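/- Let 0 ≤ q_l ≤ q_r be real numbers and let z ∈ ℂ not lie in the real interval [−q_r, q_r] (i.e. it is not the case that Im z = 0 and |Re z| ≤ q_r). Then the scattering functions satisfy the symmetries a(−z) = a(z), r(−z) = −r(z), conj(a(conj z)) = a(z), and conj(r(conj z)) = −r(z). -/
import Mathlib


open Complex

/-- `β_q(z) = ((z − q)/(z + q))^{1/4}` with the principal branch of the complex power. -/
noncomputable def betaFn (q : ℝ) (z : ℂ) : ℂ := ((z - (q : ℂ)) / (z + (q : ℂ))) ^ ((1 : ℂ) / 4)

/-- The transmission-coefficient denominator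
`a(z) = (β_{q_l}β_{q_r}⁻¹ + β_{q_l}⁻¹β_{q_r})/2`. -/
noncomputable def aFn (ql qr : ℝ) (z : ℂ) : ℂ :=
  (betaFn ql z * (betaFn qr z)⁻¹ + (betaFn ql z)⁻¹ * betaFn qr z) / 2

/-- The reflection coefficient
`r(z) = −i(β_{q_l}² − β_{q_r}²)/(β_{q_l}² + β_{q_r}²)`. -/
noncomputable def rFn (ql qr : ℝ) (z : ℂ) : ℂ :=
  -Complex.I * ((betaFn ql z) ^ 2 - (betaFn qr z) ^ 2) / ((betaFn ql z) ^ 2 + (betaFn qr z) ^ 2)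

lemma scat_sub_add_ne (q qr : ℝ) (hq : 0 ≤ q) (hlr : q ≤ qr) (z : ℂ)
    (hz : ¬(z.im = 0 ∧ |z.re| ≤ qr)) : z - (q : ℂ) ≠ 0 ∧ z + (q : ℂ) ≠ 0 := by
  constructor
  · intro h
    have hzq : z = (q : ℂ) := by linear_combination h
    exact hz ⟨by simp [hzq], by simp [hzq, _root_.abs_of_nonneg hq, hlr]⟩
  · intro h
    have hzq : z = -(q : ℂ) := by linear_combination h
    exact hz ⟨by simp [hzq], by simp [hzq, _root_.abs_of_nonneg hq, hlr]⟩

lemma scat_arg_ne (q qr : ℝ) (hq : 0 ≤ q) (hlr : q ≤ qr) (z : ℂ)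
    (hz : ¬(z.im = 0 ∧ |z.re| ≤ qr)) :
    ((z - (q : ℂ)) / (z + (q : ℂ))).arg ≠ Real.pi := by
  obtain ⟨h1, h2⟩ := scat_sub_add_ne q qr hq hlr z hz
  intro h
  rw [Complex.arg_eq_pi_iff] at h
  obtain ⟨hre, him⟩ := h
  set w : ℂ := (z - (q : ℂ)) / (z + (q : ℂ)) with hwdef
  have hw : ((w.re : ℝ) : ℂ) = w := by
    apply Complex.ext <;> simp [him]
  have heq : z - (q : ℂ) = ((w.re : ℝ) : ℂ) * (z + (q : ℂ)) := by
    rw [hw, hwdef, div_mul_cancel₀ _ h2]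
  have him2 : z.im = w.re * z.im := by
    have := congrArg Complex.im heq; simpa using this
  have hz0 : z.im = 0 := by
    have hprod : z.im * (1 - w.re) = 0 := by linear_combination him2
    rcases mul_eq_zero.mp hprod with h' | h'
    · exact h'
    · linarith
  have hre' : qr < |z.re| := by
    by_contra h0
    exact hz ⟨hz0, le_of_not_gt h0⟩
  have hreq : z.re - q = w.re * (z.re + q) := by
    have := congrArg Complex.re heq; simpa using this
  rcases lt_abs.mp hre' with h' | h'
  · nlinarith
  · nlinarith

lemma scat_ratio_ne (q qr : ℝ) (hq : 0 ≤ q) (hlr : q ≤ qr) (z : ℂ)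
    (hz : ¬(z.im = 0 ∧ |z.re| ≤ qr)) :
    (z - (q : ℂ)) / (z + (q : ℂ)) ≠ 0 := by
  obtain ⟨h1, h2⟩ := scat_sub_add_ne q qr hq hlr z hz
  exact div_ne_zero h1 h2

lemma betaFn_ne_zero (q qr : ℝ) (hq : 0 ≤ q) (hlr : q ≤ qr) (z : ℂ)
    (hz : ¬(z.im = 0 ∧ |z.re| ≤ qr)) : betaFn q z ≠ 0 := by
  simp [betaFn, Complex.cpow_eq_zero_iff, scat_ratio_ne q qr hq hlr z hz]

lemma betaFn_neg (q qr : ℝ) (hq : 0 ≤ q) (hlr : q ≤ qr) (z : ℂ)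
    (hz : ¬(z.im = 0 ∧ |z.re| ≤ qr)) : betaFn q (-z) = (betaFn q z)⁻¹ := by
  have harg := scat_arg_ne q qr hq hlr z hz
  unfold betaFn
  have hr : (-z - (q : ℂ)) / (-z + (q : ℂ)) = ((z - (q : ℂ)) / (z + (q : ℂ)))⁻¹ := by
    rw [inv_div, show (-z - (q : ℂ)) = -(z + q) by ring,
      show (-z + (q : ℂ)) = -(z - q) by ring, neg_div_neg_eq]
  rw [hr, Complex.inv_cpow _ _ harg]

lemma betaFn_conj (q qr : ℝ) (hq : 0 ≤ q) (hlr : q ≤ qr) (z : ℂ)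
    (hz : ¬(z.im = 0 ∧ |z.re| ≤ qr)) :
    starRingEnd ℂ (betaFn q (starRingEnd ℂ z)) = betaFn q z := by
  have harg := scat_arg_ne q qr hq hlr z hz
  unfold betaFn
  have h1 : (starRingEnd ℂ z - (q : ℂ)) / (starRingEnd ℂ z + (q : ℂ))
      = starRingEnd ℂ ((z - (q : ℂ)) / (z + (q : ℂ))) := by
    simp [map_div₀, map_sub, map_add, Complex.conj_ofReal]
  have h2 : starRingEnd ℂ ((1 : ℂ) / 4) = (1 : ℂ) / 4 := by
    simp [map_div₀, Complex.conj_ofNat]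
  rw [h1, Complex.conj_cpow _ _ harg, Complex.conj_conj, h2]

/-- Symmetries of the scattering functions off the interval `[−q_r, q_r]`:
`a(−z) = a(z)`, `r(−z) = −r(z)`, `conj(a(conj z)) = a(z)`, `conj(r(conj z)) = −r(z)`. -/
theorem scattering_symmetries (ql qr : ℝ) (hql : 0 ≤ ql) (hlr : ql ≤ qr)
    (z : ℂ) (hz : ¬(z.im = 0 ∧ |z.re| ≤ qr)) :
    aFn ql qr (-z) = aFn ql qr z ∧
    rFn ql qr (-z) = -rFn ql qr z ∧
    starRingEnd ℂ (aFn ql qr (starRingEnd ℂ z)) = aFn ql qr z ∧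
    starRingEnd ℂ (rFn ql qr (starRingEnd ℂ z)) = -rFn ql qr z := by
  have hqr0 : (0 : ℝ) ≤ qr := le_trans hql hlr
  have hrr : qr ≤ qr := le_refl qr
  have hnl := betaFn_neg ql qr hql hlr z hz
  have hnr := betaFn_neg qr qr hqr0 hrr z hz
  have hcl := betaFn_conj ql qr hql hlr z hz
  have hcr := betaFn_conj qr qr hqr0 hrr z hz
  have hbl := betaFn_ne_zero ql qr hql hlr z hz
  have hbr := betaFn_ne_zero qr qr hqr0 hrr z hz
  refine ⟨?_, ?_, ?_, ?_⟩
  · simp only [aFn, hnl, hnr, inv_inv]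
    ring
  · simp only [rFn, hnl, hnr]
    by_cases h : (betaFn ql z) ^ 2 + (betaFn qr z) ^ 2 = 0
    · have h' : ((betaFn ql z)⁻¹) ^ 2 + ((betaFn qr z)⁻¹) ^ 2 = 0 := by
        field_simp
        linear_combination h
      rw [h, h', div_zero, div_zero, neg_zero]
    · have hY : ((betaFn ql z)⁻¹) ^ 2 + ((betaFn qr z)⁻¹) ^ 2 ≠ 0 := by
        intro h0
        apply h
        have h1 : ((betaFn ql z) ^ 2 * (betaFn qr z) ^ 2) *
            (((betaFn ql z)⁻¹) ^ 2 + ((betaFn qr z)⁻¹) ^ 2)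
            = (betaFn ql z) ^ 2 + (betaFn qr z) ^ 2 := by
          field_simp
          ring
        rw [← h1, h0, mul_zero]
      rw [show -(-Complex.I * ((betaFn ql z) ^ 2 - (betaFn qr z) ^ 2) /
          ((betaFn ql z) ^ 2 + (betaFn qr z) ^ 2))
          = Complex.I * ((betaFn ql z) ^ 2 - (betaFn qr z) ^ 2) /
          ((betaFn ql z) ^ 2 + (betaFn qr z) ^ 2) from by ring]
      rw [div_eq_div_iff hY h]
      field_simp
      ring
  · simp only [aFn, map_div₀, map_add, map_mul, map_inv₀, hcl, hcr, Complex.conj_ofNat]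
  · simp only [rFn, map_div₀, map_add, map_mul, map_sub, map_neg, map_pow,
      Complex.conj_I, hcl, hcr]
    ring
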